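/- Fix 0<q<1 and α>−1. Then the double series Σ_{j=0}^{∞} (1/(λ̃_j^{(α)} π̃_j^{(α)})) · Σ_{n=0}^{j} π̃_n^{(α)} converges and equals q^{α+2} / ( (1−q)(1−q^{α+2}) ). Equivalently, (q^{α+1}/(1−q^{α+1})) Σ_{j=0}^{∞} q^j (1−γ(j+1,α+1;q)) = q^{α+2}/((1−q)(1−q^{α+2})). -/

import Mathlib

open Finset

/-- The finite q-Pochhammer symbol `(a;q)_n = ∏_{k=0}^{n−1} (1 − a q^k)`. -/
noncomputable def qPochN (q a : ℝ) (n : ℕ) : ℝ :=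
  ∏ k ∈ Finset.range n, (1 - a * q ^ k)

/-- The infinite q-Pochhammer symbol `(a;q)_∞ = ∏_{k=0}^∞ (1 − a q^k)`. -/
noncomputable def qPochInf (q a : ℝ) : ℝ :=
  ∏' k : ℕ, (1 - a * q ^ k)

/-- `γ(u,v;q) = (q^u;q)_∞/(q^{u+v};q)_∞`. -/
noncomputable def qgamma (q u v : ℝ) : ℝ :=
  qPochInf q (q ^ u) / qPochInf q (q ^ (u + v))

/-- `r_n^{(α)} = (1−γ(n+1,α+1;q))/(1−γ(n,α+1;q))`. -/
noncomputable def rQL (q α : ℝ) (n : ℕ) : ℝ :=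
  (1 - qgamma q ((n : ℝ) + 1) (α + 1)) / (1 - qgamma q (n : ℝ) (α + 1))

/-- The birth rates `λ̃_n^{(α)} = q^{−2n−α−1}(1−q^{n+α+1})/r_n^{(α)}`. -/
noncomputable def lamQL (q α : ℝ) (n : ℕ) : ℝ :=
  q ^ (-(2 * (n : ℝ)) - α - 1) * (1 - q ^ ((n : ℝ) + α + 1)) / rQL q α n

/-- The death rates `μ̃_n^{(α)} = q^{−2n−α}(1−q^n) r_n^{(α)}`. -/
noncomputable def muQL (q α : ℝ) (n : ℕ) : ℝ :=
  q ^ (-(2 * (n : ℝ)) - α) * (1 - q ^ (n : ℝ)) * rQL q α n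

/-- `π̃_n^{(α)} = ∏_{k=0}^{n−1} λ̃_k^{(α)}/μ̃_{k+1}^{(α)}` (with `π̃_0 = 1`). -/
noncomputable def piQL (q α : ℝ) (n : ℕ) : ℝ :=
  ∏ k ∈ Finset.range n, lamQL q α k / muQL q α (k + 1)

/-- `T̃_k^{(α)} = Σ_{j=0}^{k} π̃_j^{(α)}`. -/
noncomputable def TQL (q α : ℝ) (k : ℕ) : ℝ :=
  ∑ j ∈ Finset.range (k + 1), piQL q α j

/-- The descending q-Pochhammer symbol `(q^k;q^{−1})_ℓ = ∏_{i=0}^{ℓ−1}(1−q^{k−i})`. -/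
noncomputable def qPochDesc (q : ℝ) (k ℓ : ℕ) : ℝ :=
  ∏ i ∈ Finset.range ℓ, (1 - q ^ ((k : ℝ) - (i : ℝ)))


/-
Write `δ_n = 1 − γ(n, α+1; q)`, so that `r_n = δ_{n+1}/δ_n`. The functional equation
`(a;q)_∞ = (1 − a)(aq;q)_∞` gives `(1 − q^n)(1 − δ_{n+1}) = (1 − q^{α+1+n})(1 − δ_n)`,
so the increments `δ_n − δ_{n+1}` obey a first-order recurrence whose ratio is exactly
`λ̃_n/μ̃_{n+1}` once the `r`'s are written through `δ`. Hence `π̃_n` is a constant multiple of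
`1/δ_{n+1} − 1/δ_n`, the inner sums telescope, and the `j`-th term of the double series is
`q^{α+1}/(1 − q^{α+1}) · q^j δ_{j+1}`. Summing the recurrence over all `n`, with `δ_0 = 1` and
`δ_n = O(q^n)`, gives a linear equation for `Σ q^j δ_{j+1}`.
-/

section QPochhammer

variable {q : ℝ}

lemma multipliable_one_sub_mul_pow (hq : |q| < 1) (a : ℝ) :
    Multipliable fun k : ℕ => 1 - a * q ^ k := by
  simpa only [sub_eq_add_neg] using
    Real.multipliable_one_add_of_summable ((summable_geometric_of_abs_lt_one hq).mul_left a).neg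

lemma qPochInf_eq_one_sub_mul (hq : |q| < 1) (a : ℝ) :
    qPochInf q a = (1 - a) * qPochInf q (a * q) := by
  have hshift : (fun k : ℕ => 1 - a * q ^ (k + 1)) = fun k => 1 - a * q * q ^ k := by
    funext k; ring
  have hmul : Multipliable fun k : ℕ => 1 - a * q ^ (k + 1) :=
    (multipliable_one_sub_mul_pow hq (a * q)).congr fun k => by ring
  rw [qPochInf, tprod_eq_zero_mul' (f := fun k : ℕ => 1 - a * q ^ k) hmul, hshift, pow_zero,
    mul_one, qPochInf]

lemma qPochInf_one (hq : |q| < 1) : qPochInf q 1 = 0 := by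
  rw [qPochInf_eq_one_sub_mul hq, sub_self, zero_mul]

lemma one_sub_mul_pow_mem_Icc {a : ℝ} (hq0 : 0 ≤ q) (hq1 : q ≤ 1) (ha0 : 0 ≤ a) (k : ℕ) :
    1 - a * q ^ k ∈ Set.Icc (1 - a) 1 := by
  have hqk : q ^ k ≤ 1 := pow_le_one₀ hq0 hq1
  constructor <;> nlinarith [pow_nonneg hq0 k]

lemma one_sub_sum_le_prod_one_sub {ι : Type*} (s : Finset ι) {x : ι → ℝ}
    (hx0 : ∀ i ∈ s, 0 ≤ x i) (hx1 : ∀ i ∈ s, x i ≤ 1) :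
    1 - ∑ i ∈ s, x i ≤ ∏ i ∈ s, (1 - x i) := by
  classical
  induction s using Finset.induction_on with
  | empty => simp
  | insert i s hi ih =>
    rw [prod_insert hi, sum_insert hi]
    have hxi0 := hx0 i (mem_insert_self i s)
    have hxi1 := hx1 i (mem_insert_self i s)
    have hs := ih (fun j hj => hx0 j (mem_insert_of_mem hj))
      fun j hj => hx1 j (mem_insert_of_mem hj)
    have hsum : 0 ≤ ∑ j ∈ s, x j := sum_nonneg fun j hj => hx0 j (mem_insert_of_mem hj)
    nlinarith [mul_le_mul_of_nonneg_left hs (sub_nonneg.2 hxi1)]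

variable (hq0 : 0 ≤ q) (hq1 : q < 1)
include hq0 hq1

lemma qPochInf_pos {a : ℝ} (ha0 : 0 ≤ a) (ha1 : a < 1) : 0 < qPochInf q a := by
  have hq : |q| < 1 := abs_lt.2 ⟨by linarith, hq1⟩
  have hfac (k : ℕ) : 0 < 1 - a * q ^ k :=
    (sub_pos.2 ha1).trans_le (one_sub_mul_pow_mem_Icc hq0 hq1.le ha0 k).1
  refine lt_of_le_of_ne ((multipliable_one_sub_mul_pow hq a).hasProd.nonneg fun k => (hfac k).le)
    (Ne.symm ?_)
  simpa only [qPochInf, sub_eq_add_neg] using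
    tprod_one_add_ne_zero_of_summable (f := fun k : ℕ => -(a * q ^ k))
      (fun k => by simpa only [sub_eq_add_neg] using (hfac k).ne')
      ((summable_geometric_of_abs_lt_one hq).mul_left a).neg.norm

lemma qPochInf_le_one {a : ℝ} (ha0 : 0 ≤ a) (ha1 : a ≤ 1) : qPochInf q a ≤ 1 :=
  (multipliable_one_sub_mul_pow (abs_lt.2 ⟨by linarith, hq1⟩) a).tprod_le_of_prod_range_le
    fun _ => prod_le_one
      (fun k _ => (sub_nonneg.2 ha1).trans (one_sub_mul_pow_mem_Icc hq0 hq1.le ha0 k).1)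
      fun k _ => (one_sub_mul_pow_mem_Icc hq0 hq1.le ha0 k).2

lemma one_sub_div_le_qPochInf {a : ℝ} (ha0 : 0 ≤ a) (ha1 : a ≤ 1) :
    1 - a / (1 - q) ≤ qPochInf q a := by
  refine ge_of_tendsto'
    (multipliable_one_sub_mul_pow (abs_lt.2 ⟨by linarith, hq1⟩) a).hasProd.tendsto_prod_nat
    fun n => ?_
  have hgeom : ∑ k ∈ range n, q ^ k ≤ 1 / (1 - q) := by
    simpa only [range_eq_Ico, pow_zero] using geom_sum_Ico_le_of_lt_one (m := 0) (n := n) hq0 hq1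
  calc 1 - a / (1 - q) = 1 - a * (1 / (1 - q)) := by ring
    _ ≤ 1 - ∑ k ∈ range n, a * q ^ k := by
      rw [← mul_sum]; gcongr
    _ ≤ ∏ k ∈ range n, (1 - a * q ^ k) :=
      one_sub_sum_le_prod_one_sub _ (fun k _ => mul_nonneg ha0 (pow_nonneg hq0 k))
        fun k _ => by nlinarith [(one_sub_mul_pow_mem_Icc hq0 hq1.le ha0 k).1]

lemma qPochInf_le_qPochInf {a b : ℝ} (ha0 : 0 ≤ a) (hab : a ≤ b) (hb1 : b ≤ 1) :
    qPochInf q b ≤ qPochInf q a := by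
  have hq : |q| < 1 := abs_lt.2 ⟨by linarith, hq1⟩
  refine le_of_tendsto_of_tendsto' (multipliable_one_sub_mul_pow hq b).hasProd.tendsto_prod_nat
    (multipliable_one_sub_mul_pow hq a).hasProd.tendsto_prod_nat fun n => prod_le_prod
      (fun k _ => (sub_nonneg.2 hb1).trans (one_sub_mul_pow_mem_Icc hq0 hq1.le (ha0.trans hab) k).1)
      fun k _ => by gcongr

lemma qPochInf_lt_qPochInf {a b : ℝ} (ha0 : 0 ≤ a) (hab : a < b) (hb1 : b < 1) :
    qPochInf q b < qPochInf q a := by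
  have hq : |q| < 1 := abs_lt.2 ⟨by linarith, hq1⟩
  have hbq : b * q < 1 := by nlinarith
  rw [qPochInf_eq_one_sub_mul hq b, qPochInf_eq_one_sub_mul hq a]
  calc (1 - b) * qPochInf q (b * q) < (1 - a) * qPochInf q (b * q) := by
        gcongr
        exact qPochInf_pos hq0 hq1 (mul_nonneg (ha0.trans hab.le) hq0) hbq
    _ ≤ (1 - a) * qPochInf q (a * q) := by
        gcongr
        · linarith
        · exact qPochInf_le_qPochInf hq0 hq1 (by positivity) (by gcongr) hbq.le

end QPochhammer

section QGamma

variable {q : ℝ} (hq0 : 0 < q) (hq1 : q < 1)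
include hq0 hq1

lemma qgamma_zero_left (v : ℝ) : qgamma q 0 v = 0 := by
  rw [qgamma, Real.rpow_zero, qPochInf_one (abs_lt.2 ⟨by linarith, hq1⟩), zero_div]

lemma qPochInf_rpow_pos {u : ℝ} (hu : 0 < u) : 0 < qPochInf q (q ^ u) :=
  qPochInf_pos hq0.le hq1 (Real.rpow_nonneg hq0.le u) (Real.rpow_lt_one hq0.le hq1 hu)

lemma qgamma_pos {u v : ℝ} (hu : 0 < u) (huv : 0 < u + v) : 0 < qgamma q u v :=
  div_pos (qPochInf_rpow_pos hq0 hq1 hu) (qPochInf_rpow_pos hq0 hq1 huv)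

lemma qgamma_lt_one {u v : ℝ} (hu : 0 < u) (hv : 0 < v) : qgamma q u v < 1 := by
  rw [qgamma, div_lt_one (qPochInf_rpow_pos hq0 hq1 (by linarith))]
  exact qPochInf_lt_qPochInf hq0.le hq1 (Real.rpow_nonneg hq0.le _)
    (Real.rpow_lt_rpow_of_exponent_gt hq0 hq1 (by linarith)) (Real.rpow_lt_one hq0.le hq1 hu)

lemma one_sub_div_le_qgamma {u v : ℝ} (hu : 0 < u) (huv : 0 < u + v) :
    1 - q ^ u / (1 - q) ≤ qgamma q u v :=
  calc 1 - q ^ u / (1 - q) ≤ qPochInf q (q ^ u) :=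
        one_sub_div_le_qPochInf hq0.le hq1 (Real.rpow_nonneg hq0.le u)
          (Real.rpow_le_one hq0.le hq1.le hu.le)
    _ ≤ qgamma q u v :=
        le_div_self (qPochInf_rpow_pos hq0 hq1 hu).le (qPochInf_rpow_pos hq0 hq1 huv)
          (qPochInf_le_one hq0.le hq1 (Real.rpow_nonneg hq0.le _)
            (Real.rpow_le_one hq0.le hq1.le huv.le))

lemma one_sub_rpow_mul_qgamma_add_one {u v : ℝ} (huv : 0 < u + v) :
    (1 - q ^ u) * qgamma q (u + 1) v = (1 - q ^ (u + v)) * qgamma q u v := by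
  have hq : |q| < 1 := abs_lt.2 ⟨by linarith, hq1⟩
  have hP : qPochInf q (q ^ (u + v + 1)) ≠ 0 := (qPochInf_rpow_pos hq0 hq1 (by linarith)).ne'
  have hA : 1 - q ^ (u + v) ≠ 0 := (sub_pos.2 (Real.rpow_lt_one hq0.le hq1 huv)).ne'
  rw [qgamma, qgamma, qPochInf_eq_one_sub_mul hq (q ^ u), qPochInf_eq_one_sub_mul hq (q ^ (u + v)),
    ← Real.rpow_add_one hq0.ne', ← Real.rpow_add_one hq0.ne', add_right_comm u 1 v]
  field_simp

end QGamma

noncomputable def deltaQL (q α : ℝ) (n : ℕ) : ℝ :=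
  1 - qgamma q n (α + 1)

lemma rQL_eq_deltaQL_div (q α : ℝ) (n : ℕ) :
    rQL q α n = deltaQL q α (n + 1) / deltaQL q α n := by
  simp only [rQL, deltaQL, Nat.cast_succ]

section Rates

variable {q : ℝ} (α : ℝ) (hq0 : 0 < q)
include hq0

lemma rpow_neg_natCast_sub (t : ℝ) (m : ℕ) : q ^ (-(m : ℝ) - t) = (q ^ t * q ^ m)⁻¹ := by
  rw [← Real.rpow_natCast, ← Real.rpow_add hq0, ← Real.rpow_neg hq0.le]
  ring_nf

lemma lamQL_eq (n : ℕ) :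
    lamQL q α n = (1 - q ^ (α + 1) * q ^ n) * deltaQL q α n
      / (q ^ (α + 1) * q ^ (2 * n) * deltaQL q α (n + 1)) := by
  have hpow : q ^ (-(2 * (n : ℝ)) - α - 1) = (q ^ (α + 1) * q ^ (2 * n))⁻¹ := by
    rw [← rpow_neg_natCast_sub hq0]; push_cast; ring_nf
  have hpow' : q ^ ((n : ℝ) + α + 1) = q ^ (α + 1) * q ^ n := by
    rw [← Real.rpow_natCast, ← Real.rpow_add hq0]; ring_nf
  rw [lamQL, rQL_eq_deltaQL_div, hpow, hpow']
  field_simp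

lemma muQL_succ_eq (n : ℕ) :
    muQL q α (n + 1) = (1 - q ^ (n + 1)) * deltaQL q α (n + 2)
      / (q ^ (α + 1) * q ^ (2 * n + 1) * deltaQL q α (n + 1)) := by
  have hpow : q ^ (-(2 * ((n + 1 : ℕ) : ℝ)) - α) = (q ^ (α + 1) * q ^ (2 * n + 1))⁻¹ := by
    rw [← rpow_neg_natCast_sub hq0]; push_cast; ring_nf
  rw [muQL, rQL_eq_deltaQL_div, hpow, Real.rpow_natCast]
  field_simp

end Rates

section ModifiedQLaguerre

variable {q α : ℝ} (hq0 : 0 < q) (hq1 : q < 1)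
include hq0 hq1

lemma deltaQL_zero : deltaQL q α 0 = 1 := by
  rw [deltaQL, Nat.cast_zero, qgamma_zero_left hq0 hq1, sub_zero]

variable (hα : -1 < α)
include hα

lemma deltaQL_succ_lt_one (n : ℕ) : deltaQL q α (n + 1) < 1 :=
  sub_lt_self _
    (qgamma_pos hq0 hq1 (by positivity) (by push_cast; linarith [n.cast_nonneg (α := ℝ)]))

lemma deltaQL_pos (n : ℕ) : 0 < deltaQL q α n := by
  cases n with
  | zero => rw [deltaQL_zero hq0 hq1]; exact one_pos
  | succ n => exact sub_pos.2 (qgamma_lt_one hq0 hq1 (by positivity) (by linarith))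

lemma deltaQL_succ_le (n : ℕ) : deltaQL q α (n + 1) ≤ q ^ (n + 1) / (1 - q) := by
  have h := one_sub_div_le_qgamma hq0 hq1 (u := ((n + 1 : ℕ) : ℝ)) (v := α + 1)
    (by positivity) (by push_cast; linarith [n.cast_nonneg (α := ℝ)])
  rw [Real.rpow_natCast] at h
  rw [deltaQL]
  linarith

lemma deltaQL_recurrence (n : ℕ) :
    (1 - q ^ n) * (1 - deltaQL q α (n + 1))
      = (1 - q ^ (α + 1) * q ^ n) * (1 - deltaQL q α n) := by
  have h := one_sub_rpow_mul_qgamma_add_one hq0 hq1 (u := n) (v := α + 1)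
    (by linarith [n.cast_nonneg (α := ℝ)])
  rw [Real.rpow_add hq0, Real.rpow_natCast, mul_comm (q ^ n)] at h
  simpa only [deltaQL, Nat.cast_succ, sub_sub_cancel] using h

lemma deltaQL_sub_succ (n : ℕ) :
    (1 - q ^ (α + 1) * q ^ n) * (deltaQL q α n - deltaQL q α (n + 1))
      = (1 - q ^ (α + 1)) * q ^ n * (1 - deltaQL q α (n + 1)) := by
  linear_combination deltaQL_recurrence hq0 hq1 hα n

lemma deltaQL_sub_succ_succ (n : ℕ) :
    (deltaQL q α (n + 1) - deltaQL q α (n + 2)) * (1 - q ^ (n + 1))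
      = q * (1 - q ^ (α + 1) * q ^ n) * (deltaQL q α n - deltaQL q α (n + 1)) := by
  have hA : 1 - q ^ (α + 1) * q ^ (n + 1) ≠ 0 := by
    have : q ^ (α + 1) * q ^ (n + 1) < 1 :=
      mul_lt_one_of_nonneg_of_lt_one_left (by positivity)
        (Real.rpow_lt_one hq0.le hq1 (by linarith)) (pow_le_one₀ hq0.le hq1.le)
    linarith
  apply mul_left_cancel₀ hA
  linear_combination (1 - q ^ (n + 1)) * deltaQL_sub_succ hq0 hq1 hα (n + 1)
    + q ^ (n + 1) * (1 - q ^ (α + 1)) * deltaQL_recurrence hq0 hq1 hα (n + 1)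
    - q * (1 - q ^ (α + 1) * q ^ (n + 1)) * deltaQL_sub_succ hq0 hq1 hα n

lemma lamQL_div_muQL_succ (n : ℕ) :
    lamQL q α n / muQL q α (n + 1)
      = q * (1 - q ^ (α + 1) * q ^ n) * deltaQL q α n
        / ((1 - q ^ (n + 1)) * deltaQL q α (n + 2)) := by
  have hq : 1 - q ^ (n + 1) ≠ 0 := (sub_pos.2 (pow_lt_one₀ hq0.le hq1 n.succ_ne_zero)).ne'
  have := (deltaQL_pos hq0 hq1 hα (n + 1)).ne'
  have := (deltaQL_pos hq0 hq1 hα (n + 2)).ne'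
  rw [lamQL_eq α hq0, muQL_succ_eq α hq0]
  field_simp
  ring

lemma piQL_eq (n : ℕ) :
    piQL q α n = deltaQL q α 1 / (1 - deltaQL q α 1)
      * (1 / deltaQL q α (n + 1) - 1 / deltaQL q α n) := by
  have h1 : 1 - deltaQL q α 1 ≠ 0 := (sub_pos.2 (deltaQL_succ_lt_one hq0 hq1 hα 0)).ne'
  induction n with
  | zero =>
    have := (deltaQL_pos hq0 hq1 hα 1).ne'
    rw [piQL, prod_range_zero, deltaQL_zero hq0 hq1]
    field_simp
  | succ n ih =>
    have hq : 1 - q ^ (n + 1) ≠ 0 := (sub_pos.2 (pow_lt_one₀ hq0.le hq1 n.succ_ne_zero)).ne'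
    have := (deltaQL_pos hq0 hq1 hα n).ne'
    have := (deltaQL_pos hq0 hq1 hα (n + 1)).ne'
    have := (deltaQL_pos hq0 hq1 hα (n + 2)).ne'
    rw [piQL, prod_range_succ, ← piQL, ih, lamQL_div_muQL_succ hq0 hq1 hα]
    field_simp
    linear_combination -deltaQL q α 1 * deltaQL_sub_succ_succ hq0 hq1 hα n

lemma sum_range_piQL (j : ℕ) :
    ∑ n ∈ range (j + 1), piQL q α n
      = deltaQL q α 1 / (1 - deltaQL q α 1) * (1 / deltaQL q α (j + 1) - 1) := by
  simp_rw [piQL_eq hq0 hq1 hα]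
  rw [← mul_sum, sum_range_sub (fun n => 1 / deltaQL q α n), deltaQL_zero hq0 hq1, div_one]

lemma one_div_lamQL_mul_piQL_mul_sum_eq (j : ℕ) :
    1 / (lamQL q α j * piQL q α j) * ∑ n ∈ range (j + 1), piQL q α n
      = q ^ (α + 1) / (1 - q ^ (α + 1)) * (q ^ j * deltaQL q α (j + 1)) := by
  have hA : 1 - q ^ (α + 1) ≠ 0 := (sub_pos.2 (Real.rpow_lt_one hq0.le hq1 (by linarith))).ne'
  have h1 : 1 - deltaQL q α 1 ≠ 0 := (sub_pos.2 (deltaQL_succ_lt_one hq0 hq1 hα 0)).ne'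
  have hj1 : 1 - deltaQL q α (j + 1) ≠ 0 := (sub_pos.2 (deltaQL_succ_lt_one hq0 hq1 hα j)).ne'
  have hδ1 := (deltaQL_pos hq0 hq1 hα 1).ne'
  have hδj := (deltaQL_pos hq0 hq1 hα j).ne'
  have hδj1 := (deltaQL_pos hq0 hq1 hα (j + 1)).ne'
  have hprod : lamQL q α j * piQL q α j
      = deltaQL q α 1 / (1 - deltaQL q α 1) * ((1 - q ^ (α + 1)) * q ^ j
          * (1 - deltaQL q α (j + 1))
            / (q ^ (α + 1) * q ^ (2 * j) * deltaQL q α (j + 1) ^ 2)) := by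
    rw [lamQL_eq α hq0, piQL_eq hq0 hq1 hα]
    field_simp
    linear_combination deltaQL_sub_succ hq0 hq1 hα j
  rw [hprod, sum_range_piQL hq0 hq1 hα]
  field_simp
  ring

lemma summable_deltaQL : Summable (deltaQL q α) := by
  refine (summable_nat_add_iff 1).1 <|
    ((summable_geometric_of_lt_one hq0.le hq1).mul_left (q / (1 - q))).of_nonneg_of_le
      (fun n => (deltaQL_pos hq0 hq1 hα _).le) fun n => ?_
  calc deltaQL q α (n + 1) ≤ q ^ (n + 1) / (1 - q) := deltaQL_succ_le hq0 hq1 hα n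
    _ = q / (1 - q) * q ^ n := by ring

lemma hasSum_deltaQL_sub_succ : HasSum (fun j : ℕ => deltaQL q α j - deltaQL q α (j + 1)) 1 := by
  have hδ := (summable_deltaQL hq0 hq1 hα).hasSum
  have h := hδ.sub ((hasSum_nat_add_iff' 1).2 hδ)
  rwa [sum_range_one, deltaQL_zero hq0 hq1, sub_sub_cancel] at h

lemma hasSum_pow_mul_deltaQL_succ :
    HasSum (fun j : ℕ => q ^ j * deltaQL q α (j + 1))
      (q * (1 - q ^ (α + 1)) / ((1 - q) * (1 - q ^ (α + 1) * q))) := by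
  set A := q ^ (α + 1)
  have hA1 : A < 1 := Real.rpow_lt_one hq0.le hq1 (by linarith)
  have hgeom := hasSum_geometric_of_lt_one hq0.le hq1
  have hS : Summable fun j : ℕ => q ^ j * deltaQL q α (j + 1) :=
    hgeom.summable.of_nonneg_of_le
      (fun j => mul_nonneg (by positivity) (deltaQL_pos hq0 hq1 hα _).le)
      fun j => mul_le_of_le_one_right (by positivity) (deltaQL_succ_lt_one hq0 hq1 hα j).le
  set S := ∑' j : ℕ, q ^ j * deltaQL q α (j + 1)
  have hweighted : HasSum (fun j : ℕ => q ^ j * deltaQL q α j) (1 + q * S) := by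
    refine (hasSum_nat_add_iff' 1).1 ?_
    rw [sum_range_one, pow_zero, deltaQL_zero hq0 hq1, one_mul, add_sub_cancel_left]
    exact (hS.hasSum.mul_left q).congr_fun fun j => by ring
  have hcombined := ((hgeom.mul_left (1 - A)).add (hweighted.mul_left A)).sub
    (hasSum_deltaQL_sub_succ hq0 hq1 hα)
  have hS_eq : S = (1 - A) * (1 - q)⁻¹ + A * (1 + q * S) - 1 := by
    refine hS.hasSum.unique (hcombined.congr_fun fun j => ?_)
    linear_combination deltaQL_recurrence hq0 hq1 hα j
  have hq : 1 - q ≠ 0 := (sub_pos.2 hq1).ne'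
  have hAq : 1 - A * q ≠ 0 := by nlinarith
  have hinv : (1 - q) * (1 - q)⁻¹ = 1 := mul_inv_cancel₀ hq
  convert hS.hasSum using 1
  rw [div_eq_iff (mul_ne_zero hq hAq)]
  linear_combination (q - 1) * hS_eq + (A - 1) * hinv

end ModifiedQLaguerre

/-- Equation (6.35) (trace of the inverse of the modified q-Laguerre Jacobi operator):
`Σ_{j=0}^∞ (1/(λ̃_j π̃_j)) Σ_{n=0}^{j} π̃_n = q^{α+2}/((1−q)(1−q^{α+2}))`; equivalently
`(q^{α+1}/(1−q^{α+1})) Σ_{j=0}^∞ q^j (1−γ(j+1,α+1;q)) = q^{α+2}/((1−q)(1−q^{α+2}))`. -/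
theorem modified_qLaguerre_trace_inverse
    (q α : ℝ) (hq0 : 0 < q) (hq1 : q < 1) (hα : -1 < α) :
    Summable (fun j : ℕ =>
      (1 / (lamQL q α j * piQL q α j)) * ∑ n ∈ Finset.range (j + 1), piQL q α n) ∧
    ∑' j : ℕ, (1 / (lamQL q α j * piQL q α j)) * ∑ n ∈ Finset.range (j + 1), piQL q α n
      = q ^ (α + 2) / ((1 - q) * (1 - q ^ (α + 2))) ∧
    Summable (fun j : ℕ => q ^ j * (1 - qgamma q ((j : ℝ) + 1) (α + 1))) ∧
    q ^ (α + 1) / (1 - q ^ (α + 1)) *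
        ∑' j : ℕ, q ^ j * (1 - qgamma q ((j : ℝ) + 1) (α + 1))
      = q ^ (α + 2) / ((1 - q) * (1 - q ^ (α + 2))) := by
  have hS := hasSum_pow_mul_deltaQL_succ hq0 hq1 hα
  have hterms : (fun j : ℕ => q ^ j * (1 - qgamma q ((j : ℝ) + 1) (α + 1)))
      = fun j => q ^ j * deltaQL q α (j + 1) := by
    simp only [deltaQL, Nat.cast_succ]
  have hvalue : q ^ (α + 1) / (1 - q ^ (α + 1))
      * (q * (1 - q ^ (α + 1)) / ((1 - q) * (1 - q ^ (α + 1) * q)))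
      = q ^ (α + 2) / ((1 - q) * (1 - q ^ (α + 2))) := by
    have hA : 1 - q ^ (α + 1) ≠ 0 := (sub_pos.2 (Real.rpow_lt_one hq0.le hq1 (by linarith))).ne'
    rw [show α + 2 = α + 1 + 1 by ring, Real.rpow_add_one hq0.ne' (α + 1)]
    field_simp
  rw [funext (one_div_lamQL_mul_piQL_mul_sum_eq hq0 hq1 hα), hterms]
  exact ⟨(hS.mul_left _).summable, by rw [(hS.mul_left _).tsum_eq, hvalue], hS.summable,
    by rw [hS.tsum_eq, hvalue]⟩
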